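/- Let P be a positive opetope of dimension n with top face x_n = m_P. The γ-flag [x_n, γ(x_n), γ^{(n-2)}(x_n), …, γ^{(0)}(x_n)] is the least element of Flags_P[x_n / 0) in the flag order, and the δ-flag [x_n, γ(x_n), …, γ^{(1)}(x_n), δγ^{(1)}(x_n)] is the greatest element. -/

import Mathlib

open scoped Classical

structure PHg where
  Face : ℕ → Type
  fin : ∀ k, Finite (Face k)
  γ : ∀ k, Face (k+1) → Face k
  δ : ∀ k, Face (k+1) → Face k → Prop
  δ_total : ∀ k a, ∃ x, δ k a x
  δ0_fun : ∀ (a : Face 1) (x y : Face 0), δ 0 a x → δ 0 a y → x = y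
  bounded : ∃ n, ∀ k, n < k → IsEmpty (Face k)

abbrev PHg.FaceS (S : PHg) : Type := Σ k, S.Face k

/-- The codomain operation, viewed on faces of arbitrary dimension
(identity in dimension 0). -/
def gammaS (S : PHg) : S.FaceS → S.FaceS
  | ⟨0, x⟩ => ⟨0, x⟩
  | ⟨k+1, x⟩ => ⟨k, S.γ k x⟩

/-- `x ∈ δ(q)`. -/
def inDelta (S : PHg) (x q : S.FaceS) : Prop :=
  match q with
  | ⟨0, _⟩ => False
  | ⟨k+1, a⟩ => ∃ h : x.1 = k, S.δ k a (h ▸ x.2)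

/-- `x = γ(q)` (for `q` of positive dimension). -/
def inGammaS (S : PHg) (x q : S.FaceS) : Prop := 0 < q.1 ∧ gammaS S q = x

/-- `x ∈ ∂(q) = {γ(q)} ∪ δ(q)`. -/
def inBoundary (S : PHg) (x q : S.FaceS) : Prop := inGammaS S x q ∨ inDelta S x q

def covPlus (S : PHg) (a b : S.FaceS) : Prop :=
  ∃ α, inDelta S a α ∧ gammaS S α = b

/-- The upper order `<⁺`. -/
def ltPlus (S : PHg) : S.FaceS → S.FaceS → Prop := Relation.TransGen (covPlus S)

def lePlus (S : PHg) (a b : S.FaceS) : Prop := a = b ∨ ltPlus S a b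

def perpPlus (S : PHg) (a b : S.FaceS) : Prop := ltPlus S a b ∨ ltPlus S b a

def covMinus (S : PHg) (a b : S.FaceS) : Prop := 0 < a.1 ∧ inDelta S (gammaS S a) b

/-- The lower order `<⁻`. -/
def ltMinus (S : PHg) : S.FaceS → S.FaceS → Prop := Relation.TransGen (covMinus S)

def perpMinus (S : PHg) (a b : S.FaceS) : Prop := ltMinus S a b ∨ ltMinus S b a

/-- Iterated codomain `γ^{(k)}`. -/
def gammaIter (S : PHg) (k : ℕ) (p : S.FaceS) : S.FaceS := (gammaS S)^[p.1 - k] p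

/-- `X` is a `<⁺`-interval. -/
def IntervalPlus (S : PHg) (X : Set S.FaceS) : Prop :=
  X = ∅ ∨ ∃ x0 x1, lePlus S x0 x1 ∧ X = {x | lePlus S x0 x ∧ lePlus S x x1}

def hasDim (S : PHg) (n : ℕ) : Prop :=
  Nonempty (S.Face n) ∧ ∀ k, n < k → IsEmpty (S.Face k)

/-- A positive opetope: a nonempty positive hypergraph satisfying globularity,
strictness, disjointness, pencil linearity, and having at most one face outside
`δ(S_{k+1})` in each dimension. -/
structure IsOpetope (S : PHg) : Prop where
  ne : Nonempty (S.Face 0)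
  glob_gamma : ∀ a : S.FaceS, 2 ≤ a.1 →
    ({gammaS S (gammaS S a)} : Set S.FaceS) =
      {x | ∃ y, inDelta S y a ∧ gammaS S y = x} \ {x | ∃ y, inDelta S y a ∧ inDelta S x y}
  glob_delta : ∀ a : S.FaceS, 2 ≤ a.1 →
    {x | inDelta S x (gammaS S a)} =
      {x | ∃ y, inDelta S y a ∧ inDelta S x y} \ {x | ∃ y, inDelta S y a ∧ gammaS S y = x}
  strict : ∀ a, ¬ ltPlus S a a
  linear0 : ∀ a b : S.FaceS, a.1 = 0 → b.1 = 0 → a = b ∨ perpPlus S a b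
  disj : ∀ a b : S.FaceS, 0 < a.1 → ¬ (perpMinus S a b ∧ perpPlus S a b)
  pencil_gamma : ∀ x a b, inGammaS S x a → inGammaS S x b → a = b ∨ perpPlus S a b
  pencil_delta : ∀ x a b, inDelta S x a → inDelta S x b → a = b ∨ perpPlus S a b
  size_le_one : ∀ k (a b : S.Face k),
    (¬ ∃ α : S.Face (k+1), S.δ k α a) → (¬ ∃ α : S.Face (k+1), S.δ k α b) → a = b
/-- A restricted flag from dimension `m` down to dimension `l`,
encoded as a function `ℕ → S.FaceS` (entries outside `[l,m]` are irrelevant). -/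
def IsRFlag (S : PHg) (m l : ℕ) (F : ℕ → S.FaceS) : Prop :=
  (∀ i, l ≤ i → i ≤ m → (F i).1 = i) ∧
  (∀ i, l ≤ i → i < m → inBoundary S (F i) (F (i+1)))

/-- The pencil order `≺ₓ` on the pencil over `x`. -/
def pencilLt (S : PHg) (x a b : S.FaceS) : Prop :=
  (inGammaS S x b ∧ inDelta S x a) ∨
  (inDelta S x a ∧ inDelta S x b ∧ ltPlus S a b) ∨
  (inGammaS S x a ∧ inGammaS S x b ∧ ltPlus S b a)

/-- The sign of the flag segment `[F j, …, F l]`. -/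
noncomputable def sgnSeg (S : PHg) (l : ℕ) (F : ℕ → S.FaceS) : ℕ → ℤ
  | 0 => 1
  | j+1 => if l ≤ j ∧ inDelta S (F j) (F (j+1)) then -(sgnSeg S l F j) else sgnSeg S l F j

/-- The flag order `◁` on flags from dimension `m` down to `l`. -/
def flagLt (S : PHg) (l m : ℕ) (F G : ℕ → S.FaceS) : Prop :=
  ∃ k, l ≤ k ∧ k ≤ m ∧ (∀ i, l ≤ i → i < k → F i = G i) ∧ F k ≠ G k ∧
    ((k = 0 ∧ ltPlus S (G 0) (F 0)) ∨
     (0 < k ∧ sgnSeg S l F (k-1) = 1 ∧ pencilLt S (F (k-1)) (F k) (G k)) ∨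
     (0 < k ∧ sgnSeg S l F (k-1) = -1 ∧ pencilLt S (F (k-1)) (G k) (F k)))

/-- `i` is the low level `ll` of the flag `F` (with top dimension `n`). -/
def LowLevelT (S : PHg) (n : ℕ) (F : ℕ → S.FaceS) (i : ℕ) : Prop :=
  i + 2 ≤ n ∧ inDelta S (F (i+1)) (F (i+2)) ∧
    ∀ j, i < j → j + 2 ≤ n → ¬ inDelta S (F (j+1)) (F (j+2))

/-- Membership in `Flags[t / b]`, flags from top face `t` (dim `m`) to bottom face `b` (dim `l`). -/
def MemFlags (S : PHg) (l m : ℕ) (t b : S.FaceS) (F : ℕ → S.FaceS) : Prop :=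
  IsRFlag S m l F ∧ F m = t ∧ F l = b

def EqOnFl {α : Type*} (l m : ℕ) (F G : ℕ → α) : Prop :=
  ∀ i, l ≤ i → i ≤ m → F i = G i

/-- `G` is the successor of `F` in `Flags[t / b]` with respect to the flag order. -/
def SuccFl (S : PHg) (l m : ℕ) (t b : S.FaceS) (F G : ℕ → S.FaceS) : Prop :=
  MemFlags S l m t b F ∧ MemFlags S l m t b G ∧ flagLt S l m F G ∧
  ∀ H, MemFlags S l m t b H → flagLt S l m F H → (EqOnFl l m G H ∨ flagLt S l m G H)

/-! If `γ a ∈ δ q` then `a <⁻ q`, so by strictness and disjointness `q` is not `≤⁺ a`. Every face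
lies `≤⁺` below the unique face of its dimension that is in no `δ` (finiteness and
`size_le_one`), so the codomain of a face lying in no `δ` again lies in no `δ`. Starting from the
top face, `γ^{(k)}(x_n)` is therefore the `<⁺`-greatest `k`-face, and the `δ`-vertex of
`γ^{(1)}(x_n)` is the codomain of no edge, hence the `<⁺`-least vertex. A flag compared with
either extremal flag at the first level where they differ meets only these extremal faces, and
the sign there is `+1` along the `γ`-flag and `-1` along the `δ`-flag. -/

def gammaFlag (S : PHg) (t : S.FaceS) : ℕ → S.FaceS := fun j => gammaIter S j t

def deltaFlag (S : PHg) (t t0 : S.FaceS) : ℕ → S.FaceS :=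
  fun j => if j = 0 then t0 else gammaIter S j t

section

variable {S : PHg}

theorem gammaS_fst (q : S.FaceS) : (gammaS S q).1 = q.1 - 1 := by
  obtain ⟨_ | k, a⟩ := q <;> rfl

theorem inDelta_fst {x q : S.FaceS} (h : inDelta S x q) : x.1 + 1 = q.1 := by
  obtain ⟨_ | k, a⟩ := q
  · exact h.elim
  · obtain ⟨rfl, -⟩ := h
    rfl

theorem inDelta_mk_iff {k : ℕ} {x : S.Face k} {a : S.Face (k + 1)} :
    inDelta S ⟨k, x⟩ ⟨k + 1, a⟩ ↔ S.δ k a x :=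
  ⟨fun ⟨_, h⟩ => h, fun h => ⟨rfl, h⟩⟩

theorem gammaIter_fst (k : ℕ) (t : S.FaceS) : (gammaIter S k t).1 = min k t.1 := by
  have iterate_fst : ∀ m (p : S.FaceS), ((gammaS S)^[m] p).1 = p.1 - m := by
    intro m
    induction m with
    | zero => simp
    | succ m ih => intro p; rw [Function.iterate_succ_apply', gammaS_fst, ih]; omega
  rw [gammaIter, iterate_fst]
  omega

theorem inGammaS_gammaIter {k : ℕ} {t : S.FaceS} (hk : k < t.1) :
    inGammaS S (gammaIter S k t) (gammaIter S (k + 1) t) := by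
  refine ⟨by rw [gammaIter_fst]; omega, ?_⟩
  rw [gammaIter, gammaIter, ← Function.iterate_succ_apply' (gammaS S)]
  congr 1
  omega

theorem fst_of_inDelta_gammaIter_one {t t0 : S.FaceS} (ht0 : inDelta S t0 (gammaIter S 1 t)) :
    t0.1 = 0 ∧ 1 ≤ t.1 := by
  have := inDelta_fst ht0
  rw [gammaIter_fst] at this
  omega

theorem sgnSeg_congr {l j : ℕ} {F G : ℕ → S.FaceS} (h : ∀ i ≤ j, F i = G i) :
    sgnSeg S l F j = sgnSeg S l G j := by
  induction j with
  | zero => rfl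
  | succ j ih =>
    simp only [sgnSeg, h j (by omega), h (j + 1) le_rfl, ih fun i hi => h i (by omega)]

theorem eqOnFl_or_exists_first_ne {α : Type*} (l m : ℕ) (F G : ℕ → α) :
    EqOnFl l m F G ∨
      ∃ k, l ≤ k ∧ k ≤ m ∧ (∀ i, l ≤ i → i < k → F i = G i) ∧ F k ≠ G k := by
  by_cases h : EqOnFl l m F G
  · exact Or.inl h
  · have hex : ∃ k, l ≤ k ∧ k ≤ m ∧ F k ≠ G k := by simpa [EqOnFl] using h
    obtain ⟨hl, hm, hne⟩ := Nat.find_spec hex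
    refine Or.inr ⟨Nat.find hex, hl, hm, fun i hli hi => ?_, hne⟩
    by_contra hFG
    exact Nat.find_min hex hi ⟨hli, by omega, hFG⟩

theorem isRFlag_gammaFlag {n : ℕ} {t : S.FaceS} (ht : t.1 = n) (l : ℕ) :
    IsRFlag S n l (gammaFlag S t) :=
  ⟨fun i _ hi => by rw [gammaFlag, gammaIter_fst]; omega,
    fun i _ hi => Or.inl (inGammaS_gammaIter (by omega))⟩

theorem isRFlag_deltaFlag {n : ℕ} {t t0 : S.FaceS} (ht : t.1 = n)
    (ht0 : inDelta S t0 (gammaIter S 1 t)) : IsRFlag S n 0 (deltaFlag S t t0) := by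
  refine ⟨fun i _ hi => ?_, fun i _ hi => ?_⟩ <;> rcases i with _ | i
  · exact (fst_of_inDelta_gammaIter_one ht0).1
  · exact (isRFlag_gammaFlag ht 0).1 (i + 1) (Nat.zero_le _) hi
  · exact Or.inr ht0
  · exact (isRFlag_gammaFlag ht 0).2 (i + 1) (Nat.zero_le _) hi

namespace IsOpetope

theorem not_lePlus_of_covMinus (hS : IsOpetope S) {a q : S.FaceS} (h : covMinus S a q) :
    ¬ lePlus S a q ∧ ¬ lePlus S q a := by
  have hne : a ≠ q := by
    rintro rfl
    exact hS.strict _ (.single ⟨a, h.2, rfl⟩)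
  have hperp : ¬ perpPlus S a q := fun hp => hS.disj a q h.1 ⟨Or.inl (.single h), hp⟩
  exact ⟨fun h' => h'.elim hne fun hlt => hperp (Or.inl hlt),
    fun h' => h'.elim (fun e => hne e.symm) fun hlt => hperp (Or.inr hlt)⟩

theorem eq_of_forall_not_inDelta (hS : IsOpetope S) {a b : S.FaceS} (hab : a.1 = b.1)
    (ha : ∀ q, ¬ inDelta S a q) (hb : ∀ q, ¬ inDelta S b q) : a = b := by
  obtain ⟨k, a⟩ := a
  obtain ⟨k', b⟩ := b
  obtain rfl : k = k' := hab
  exact congrArg _ <| hS.size_le_one k a b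
    (fun ⟨α, hα⟩ => ha ⟨k + 1, α⟩ (inDelta_mk_iff.2 hα))
    (fun ⟨α, hα⟩ => hb ⟨k + 1, α⟩ (inDelta_mk_iff.2 hα))

theorem lePlus_of_forall_not_inDelta (hS : IsOpetope S) {m : S.FaceS}
    (hm : ∀ q, ¬ inDelta S m q) {w : S.FaceS} (hw : w.1 = m.1) : lePlus S w m := by
  obtain ⟨k, w⟩ := w
  have := S.fin k
  let above : S.Face k → S.Face k → Prop := fun a b => ltPlus S ⟨k, b⟩ ⟨k, a⟩
  have : IsTrans (S.Face k) above := ⟨fun _ _ _ h1 h2 => h2.trans h1⟩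
  have : Std.Irrefl above := ⟨fun a => hS.strict _⟩
  induction w using (Finite.wellFounded_of_trans_of_irrefl above).induction with
  | _ w ih =>
    by_cases hw' : ∃ α, S.δ k α w
    · obtain ⟨α, hα⟩ := hw'
      have hcov : covPlus S ⟨k, w⟩ ⟨k, S.γ k α⟩ := ⟨⟨k + 1, α⟩, inDelta_mk_iff.2 hα, rfl⟩
      right
      rcases ih (S.γ k α) (.single hcov) hw with he | hlt
      · exact he ▸ .single hcov
      · exact .head hcov hlt
    · left
      refine hS.eq_of_forall_not_inDelta hw ?_ hm
      rintro ⟨_ | j, α⟩ hα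
      · exact hα.elim
      · obtain ⟨rfl, hα⟩ := hα
        exact hw' ⟨α, hα⟩

theorem forall_not_inDelta_gammaS (hS : IsOpetope S) {a : S.FaceS}
    (ha : ∀ q, ¬ inDelta S a q) (q : S.FaceS) : ¬ inDelta S (gammaS S a) q := by
  obtain ⟨_ | k, a⟩ := a
  · exact ha q
  · intro hq
    exact (hS.not_lePlus_of_covMinus ⟨k.succ_pos, hq⟩).2
      (hS.lePlus_of_forall_not_inDelta ha (inDelta_fst hq).symm)

theorem forall_not_inDelta_gammaIter (hS : IsOpetope S) {t : S.FaceS}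
    (htop : ∀ q, ¬ inDelta S t q) (k : ℕ) (q : S.FaceS) : ¬ inDelta S (gammaIter S k t) q := by
  suffices ∀ m q, ¬ inDelta S ((gammaS S)^[m] t) q from this _ q
  intro m
  induction m with
  | zero => exact htop
  | succ m ih => rw [Function.iterate_succ_apply']; exact hS.forall_not_inDelta_gammaS ih

theorem ltPlus_gammaIter (hS : IsOpetope S) {t : S.FaceS} (htop : ∀ q, ¬ inDelta S t q)
    {k : ℕ} (hk : k ≤ t.1) {w : S.FaceS} (hw : w.1 = k) (hne : w ≠ gammaIter S k t) :
    ltPlus S w (gammaIter S k t) :=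
  (hS.lePlus_of_forall_not_inDelta (hS.forall_not_inDelta_gammaIter htop k)
    (by rw [gammaIter_fst]; omega)).resolve_left hne

theorem gammaS_ne_of_inDelta (hS : IsOpetope S) {a x q : S.FaceS}
    (ha : ∀ p, ¬ inDelta S a p) (hx : inDelta S x a) (hq : 0 < q.1) : gammaS S q ≠ x := by
  rintro rfl
  have hdim : q.1 = a.1 := by have := inDelta_fst hx; rw [gammaS_fst] at this; omega
  exact (hS.not_lePlus_of_covMinus ⟨hq, hx⟩).1 (hS.lePlus_of_forall_not_inDelta ha hdim)

theorem lePlus_of_forall_gammaS_ne (hS : IsOpetope S) {x v : S.FaceS} (hx : x.1 = 0)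
    (hv : v.1 = 0) (hmin : ∀ q : S.FaceS, 0 < q.1 → gammaS S q ≠ x) : lePlus S x v := by
  rcases hS.linear0 v x hv hx with rfl | hlt | hlt
  · exact Or.inl rfl
  · obtain ⟨_, -, α, hα, hγ⟩ := Relation.TransGen.tail'_iff.1 hlt
    exact absurd hγ (hmin α (by have := inDelta_fst hα; omega))
  · exact Or.inr hlt

theorem pencilLt_gammaIter (hS : IsOpetope S) {t : S.FaceS} (htop : ∀ q, ¬ inDelta S t q)
    {k : ℕ} (hk : k < t.1) {w : S.FaceS} (hw : w.1 = k + 1)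
    (hb : inBoundary S (gammaIter S k t) w) (hne : w ≠ gammaIter S (k + 1) t) :
    pencilLt S (gammaIter S k t) (gammaIter S (k + 1) t) w :=
  Or.inr <| Or.inr ⟨inGammaS_gammaIter hk,
    hb.resolve_right (hS.forall_not_inDelta_gammaIter htop k w),
    hS.ltPlus_gammaIter htop hk hw hne⟩

theorem sgnSeg_gammaFlag (hS : IsOpetope S) {t : S.FaceS} (htop : ∀ q, ¬ inDelta S t q)
    (l j : ℕ) : sgnSeg S l (gammaFlag S t) j = 1 := by
  induction j with
  | zero => rfl
  | succ j ih => rw [sgnSeg, if_neg fun h => hS.forall_not_inDelta_gammaIter htop j _ h.2, ih]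

theorem sgnSeg_deltaFlag (hS : IsOpetope S) {t t0 : S.FaceS} (htop : ∀ q, ¬ inDelta S t q)
    (ht0 : inDelta S t0 (gammaIter S 1 t)) {j : ℕ} (hj : 1 ≤ j) :
    sgnSeg S 0 (deltaFlag S t t0) j = -1 := by
  induction j, hj using Nat.le_induction with
  | base => simp [sgnSeg, deltaFlag, ht0]
  | succ j hj ih =>
    have hDj : deltaFlag S t t0 j = gammaIter S j t := if_neg (by omega)
    rw [sgnSeg, if_neg fun h => hS.forall_not_inDelta_gammaIter htop j _ (hDj ▸ h.2), ih]

theorem gammaFlag_least (hS : IsOpetope S) {n : ℕ} {t : S.FaceS} (ht : t.1 = n)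
    (htop : ∀ q, ¬ inDelta S t q) {F : ℕ → S.FaceS} (hF : IsRFlag S n 0 F) :
    EqOnFl 0 n F (gammaFlag S t) ∨ flagLt S 0 n (gammaFlag S t) F := by
  refine (eqOnFl_or_exists_first_ne 0 n F _).imp_right ?_
  rintro ⟨k, -, hkn, hagree, hne⟩
  refine ⟨k, k.zero_le, hkn, fun i hi hik => (hagree i hi hik).symm, Ne.symm hne, ?_⟩
  rcases k with _ | k
  · exact Or.inl ⟨rfl, hS.ltPlus_gammaIter htop (Nat.zero_le _) (hF.1 0 le_rfl hkn) hne⟩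
  · refine Or.inr (Or.inl ⟨k.succ_pos, hS.sgnSeg_gammaFlag htop 0 k, ?_⟩)
    have hb := hF.2 k (Nat.zero_le _) hkn
    rw [hagree k (Nat.zero_le _) k.lt_succ_self] at hb
    exact hS.pencilLt_gammaIter htop (by omega) (hF.1 _ (Nat.zero_le _) hkn) hb hne

theorem deltaFlag_greatest (hS : IsOpetope S) {n : ℕ} {t t0 : S.FaceS} (ht : t.1 = n)
    (htop : ∀ q, ¬ inDelta S t q) (ht0 : inDelta S t0 (gammaIter S 1 t))
    {F : ℕ → S.FaceS} (hF : IsRFlag S n 0 F) :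
    EqOnFl 0 n F (deltaFlag S t t0) ∨ flagLt S 0 n F (deltaFlag S t t0) := by
  have hmin : ∀ q : S.FaceS, 0 < q.1 → gammaS S q ≠ t0 :=
    fun q => hS.gammaS_ne_of_inDelta (hS.forall_not_inDelta_gammaIter htop 1) ht0
  have ht0_fst := fst_of_inDelta_gammaIter_one ht0
  refine (eqOnFl_or_exists_first_ne 0 n F _).imp_right ?_
  rintro ⟨k, -, hkn, hagree, hne⟩
  refine ⟨k, k.zero_le, hkn, hagree, hne, ?_⟩
  rcases k with _ | _ | k
  · refine Or.inl ⟨rfl, ?_⟩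
    exact (hS.lePlus_of_forall_gammaS_ne ht0_fst.1 (hF.1 0 le_rfl hkn) hmin).resolve_left
      (Ne.symm hne)
  · have hF0 : F 0 = t0 := hagree 0 le_rfl one_pos
    have hF1 := hF.1 1 (Nat.zero_le _) hkn
    refine Or.inr (Or.inl ⟨one_pos, rfl, Or.inr (Or.inl ⟨?_, hF0 ▸ ht0, ?_⟩)⟩)
    · have hb := hF.2 0 le_rfl hkn
      exact hb.resolve_left fun hγ => hmin _ hγ.1 (hγ.2.trans hF0)
    · exact hS.ltPlus_gammaIter htop ht0_fst.2 hF1 hne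
  · refine Or.inr (Or.inr ⟨by omega, ?_, ?_⟩)
    · rw [sgnSeg_congr fun i hi => hagree i (Nat.zero_le _) (by omega)]
      exact hS.sgnSeg_deltaFlag htop ht0 (by omega)
    · have hFk : F (k + 1) = gammaIter S (k + 1) t := hagree (k + 1) (Nat.zero_le _) (by omega)
      have hb := hF.2 (k + 1) (Nat.zero_le _) hkn
      rw [hFk] at hb
      show pencilLt S (F (k + 1)) (gammaIter S (k + 2) t) (F (k + 2))
      rw [hFk]
      exact hS.pencilLt_gammaIter htop (by omega) (hF.1 _ (Nat.zero_le _) hkn) hb hne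

end IsOpetope

end

/-- In `Flags_P[x_n / 0)`, the `γ`-flag
`[x_n, γ(x_n), …, γ^{(0)}(x_n)]` is the least element and the `δ`-flag
`[x_n, γ(x_n), …, γ^{(1)}(x_n), δγ^{(1)}(x_n)]` is the greatest element. -/
theorem initial_and_terminal_flags
    (S : PHg) (hS : IsOpetope S) (n : ℕ) (hn : hasDim S n)
    (t : S.FaceS) (ht : t.1 = n)
    (t0 : S.FaceS) (ht0 : inDelta S t0 (gammaIter S 1 t)) :
    IsRFlag S n 0 (fun j => gammaIter S j t) ∧
    IsRFlag S n 0 (fun j => if j = 0 then t0 else gammaIter S j t) ∧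
    (∀ F, IsRFlag S n 0 F → F n = t →
      EqOnFl 0 n F (fun j => gammaIter S j t) ∨
        flagLt S 0 n (fun j => gammaIter S j t) F) ∧
    (∀ F, IsRFlag S n 0 F → F n = t →
      EqOnFl 0 n F (fun j => if j = 0 then t0 else gammaIter S j t) ∨
        flagLt S 0 n F (fun j => if j = 0 then t0 else gammaIter S j t)) := by
  have htop : ∀ q, ¬ inDelta S t q := fun q hq =>
    (hn.2 q.1 (by have := inDelta_fst hq; omega)).false q.2
  exact ⟨isRFlag_gammaFlag ht 0, isRFlag_deltaFlag ht ht0,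
    fun F hF _ => hS.gammaFlag_least ht htop hF,
    fun F hF _ => hS.deltaFlag_greatest ht htop ht0 hF⟩
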